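/- (Fourier coefficients) Let V be an innerproduct hyperspace over the real hyperfield and S = {α₁, ..., αₙ} an orthogonal set of non-zero vectors. If 1 * α = λ₁ * α₁ # λ₂ * α₂ # ... # λₙ * αₙ for some α ∈ V and λ₁, ..., λₙ ∈ ℝ, then λⱼ = ⟨α, αⱼ⟩ / ‖αⱼ‖² for each j, and hence 1 * α = (⟨α,α₁⟩/‖α₁‖²) * α₁ # ... # (⟨α,αₙ⟩/‖αₙ‖²) * αₙ. -/

import Mathlib

/-!
Pairing with a fixed vector `γ` turns hyper-sums and hyper-scalings into ordinary sums and
products of suprema (`sup_hadd`, `sup_smul`), so the supremum of `⟨x, γ⟩` over a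
hyper-linear combination `λ₁*α₁ # ⋯ # λₙ*αₙ` is `∑ λᵢ ⟨αᵢ, γ⟩`. Over `1 * α` the same supremum
is `⟨α, γ⟩`; taking `γ = αⱼ` and using orthogonality leaves `⟨α, αⱼ⟩ = λⱼ ‖αⱼ‖²`.
-/

/-- Hyperaddition of two sets: `A # B = ⋃_{a∈A, b∈B} a # b`. -/
def hSum {V : Type*} (hadd : V → V → Set V) (A B : Set V) : Set V :=
  ⋃ a ∈ A, ⋃ b ∈ B, hadd a b

/-- A commutative hypergroup. -/
structure CommHypergroup (V : Type*) where
  hadd : V → V → Set V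
  hadd_nonempty : ∀ a b, (hadd a b).Nonempty
  hadd_comm : ∀ a b, hadd a b = hadd b a
  hadd_assoc : ∀ a b c, hSum hadd {a} (hadd b c) = hSum hadd (hadd a b) {c}
  zero : V
  neg : V → V
  neg_spec : ∀ a, zero ∈ hadd a (neg a) ∧ zero ∈ hadd (neg a) a
  neg_unique : ∀ a b, zero ∈ hadd a b → zero ∈ hadd b a → b = neg a
  mem_shift : ∀ a b c, a ∈ hadd b c → b ∈ hadd a (neg c)

/-- A hyperfield: hyperaddition, ordinary multiplication. -/
structure Hyperfield (F : Type*) extends CommHypergroup F where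
  mul : F → F → F
  mul_assoc' : ∀ a b c, mul (mul a b) c = mul a (mul b c)
  mul_comm' : ∀ a b, mul a b = mul b a
  distrib : ∀ a b c, (mul a) '' (hadd b c) = hadd (mul a b) (mul a c)
  mul_zero' : ∀ a, mul a zero = zero
  one : F
  mul_one' : ∀ a, mul a one = a
  mul_inv' : ∀ a, a ≠ zero → ∃ b, mul a b = one

/-- A hypervector space over a hyperfield `K`. -/
structure HypVecSp (F : Type*) (K : Hyperfield F) (V : Type*) extends CommHypergroup V where
  smul : F → V → Set V
  smul_nonempty : ∀ a α, (smul a α).Nonempty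
  smul_hadd : ∀ a α β, (⋃ x ∈ hadd α β, smul a x) ⊆ hSum hadd (smul a α) (smul a β)
  hadd_smul : ∀ a b α, (⋃ c ∈ K.hadd a b, smul c α) ⊆ hSum hadd (smul a α) (smul b α)
  mul_smul' : ∀ a b α, smul (K.mul a b) α = ⋃ x ∈ smul b α, smul a x
  neg_smul' : ∀ a α, smul (K.neg a) α = smul a (neg α)
  one_smul' : ∀ α, α ∈ smul K.one α
  zero_smul' : ∀ α, zero ∈ smul K.zero α
  zero_smul_zero : smul K.zero zero = {zero}

/-- The hyper-linear combination `λ₁*α₁ # λ₂*α₂ # ⋯ # λₙ*αₙ` of a list of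
scalar/vector pairs (the empty combination is `{θ}`, which is neutral for `#`). -/
def combo {F V : Type*} (hadd : V → V → Set V) (smul : F → V → Set V) (z : V) :
    List (F × V) → Set V
  | [] => {z}
  | p :: l => hSum hadd (smul p.1 p.2) (combo hadd smul z l)

/-- The span of a set `A`: all vectors lying in some finite hyper-linear
combination of elements of `A`. -/
def hspan {F V : Type*} (hadd : V → V → Set V) (smul : F → V → Set V) (z : V)
    (A : Set V) : Set V :=
  {x | ∃ l : List (F × V), l ≠ [] ∧ (∀ p ∈ l, p.2 ∈ A) ∧ x ∈ combo hadd smul z l}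

/-- The real hyperfield: a hyperfield structure on `ℝ` whose multiplication,
zero and one are the usual ones. -/
structure RealHyperfield extends Hyperfield ℝ where
  zero_eq : zero = 0
  one_eq : one = 1
  mul_eq : ∀ a b, mul a b = a * b

/-- An innerproduct hyperspace over the real hyperfield. -/
structure InnerHyp (K : RealHyperfield) (V : Type*) extends
    HypVecSp ℝ K.toHyperfield V where
  inner : V → V → ℝ
  inner_pos : ∀ α, α ≠ zero → 0 < inner α α
  inner_self_eq_zero : ∀ α, inner α α = 0 ↔ α = zero
  inner_symm : ∀ α β, inner α β = inner β α
  sup_hadd : ∀ α β γ, IsLUB ((fun x => inner x γ) '' hadd α β) (inner α γ + inner β γ)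
  sup_smul : ∀ a α β, IsLUB ((fun x => inner x β) '' smul a α) (a * inner α β)

open scoped Pointwise

lemma isLUB_image_hSum {V G : Type*} [AddGroup G] [Preorder G] [AddLeftMono G] [AddRightMono G]
    {hadd : V → V → Set V} {f : V → G} (hf : ∀ a b, IsLUB (f '' hadd a b) (f a + f b))
    {A B : Set V} {a b : G} (hA : IsLUB (f '' A) a) (hB : IsLUB (f '' B) b) :
    IsLUB (f '' hSum hadd A B) (a + b) := by
  have hunion : f '' hSum hadd A B = ⋃ p : A × B, f '' hadd p.1 p.2 := by
    simp only [hSum, Set.image_iUnion, Set.iUnion_prod', Set.iUnion_subtype]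
  have hrange : Set.range (fun p : A × B => f p.1 + f p.2) = f '' A + f '' B := by
    ext x
    simp [Set.mem_add]
  rw [hunion, ← isLUB_iUnion_iff_of_isLUB (fun p : A × B => hf p.1 p.2), hrange]
  exact hA.add hB

namespace InnerHyp

variable {K : RealHyperfield} {V : Type*} (W : InnerHyp K V)

lemma inner_zero_left (γ : V) : W.inner W.zero γ = 0 := by
  have h := W.sup_smul K.zero W.zero γ
  rw [W.zero_smul_zero, K.zero_eq, zero_mul, Set.image_singleton] at h
  exact isLUB_singleton.unique h

lemma isLUB_inner_combo (γ : V) (L : List (ℝ × V)) :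
    IsLUB ((W.inner · γ) '' combo W.hadd W.smul W.zero L)
      (L.map fun p => p.1 * W.inner p.2 γ).sum := by
  induction L with
  | nil =>
    rw [combo, Set.image_singleton, List.map_nil, List.sum_nil, inner_zero_left]
    exact isLUB_singleton
  | cons p L ih =>
    rw [combo, List.map_cons, List.sum_cons]
    exact isLUB_image_hSum (fun a b => W.sup_hadd a b γ) (W.sup_smul p.1 p.2 γ) ih

lemma inner_eq_sum_of_smul_one_eq_combo {α : V} {L : List (ℝ × V)}
    (h : W.smul 1 α = combo W.hadd W.smul W.zero L) (γ : V) :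
    W.inner α γ = (L.map fun p => p.1 * W.inner p.2 γ).sum := by
  have hα := W.sup_smul 1 α γ
  rw [one_mul, h] at hα
  exact hα.unique (W.isLUB_inner_combo γ L)

lemma inner_eq_mul_of_smul_one_eq_combo_of_orthogonal {n : ℕ} {av : Fin n → V}
    (horth : ∀ i j, i ≠ j → W.inner (av i) (av j) = 0) {α : V} {l : Fin n → ℝ}
    (h : W.smul 1 α = combo W.hadd W.smul W.zero (List.ofFn fun i => (l i, av i))) (j : Fin n) :
    W.inner α (av j) = l j * W.inner (av j) (av j) := by
  rw [W.inner_eq_sum_of_smul_one_eq_combo h, List.map_ofFn, List.sum_ofFn]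
  refine Finset.sum_eq_single j (fun i _ hij => ?_) (by simp)
  simp only [Function.comp_apply, horth i j hij, mul_zero]

end InnerHyp

/-- Fourier coefficients: if `1 * α = λ₁*α₁ # ⋯ # λₙ*αₙ` with the `αᵢ`
orthogonal and non-zero, then `λⱼ = ⟨α,αⱼ⟩/‖αⱼ‖²` and hence
`1 * α = ∑ᵢ (⟨α,αᵢ⟩/‖αᵢ‖²) * αᵢ`. -/
theorem fourier_coefficients {K : RealHyperfield} {V : Type*} (W : InnerHyp K V)
    {n : ℕ} (av : Fin n → V)
    (hne : ∀ i, av i ≠ W.zero)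
    (horth : ∀ i j, i ≠ j → W.inner (av i) (av j) = 0)
    (α : V) (l : Fin n → ℝ)
    (h : W.smul 1 α = combo W.hadd W.smul W.zero (List.ofFn fun i => (l i, av i))) :
    (∀ j, l j = W.inner α (av j) / W.inner (av j) (av j)) ∧
    W.smul 1 α = combo W.hadd W.smul W.zero
      (List.ofFn fun i => (W.inner α (av i) / W.inner (av i) (av i), av i)) := by
  have hcoeff : ∀ j, l j = W.inner α (av j) / W.inner (av j) (av j) := fun j => by
    rw [W.inner_eq_mul_of_smul_one_eq_combo_of_orthogonal horth h j,
      mul_div_cancel_right₀ _ (W.inner_pos _ (hne j)).ne']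
  refine ⟨hcoeff, ?_⟩
  simpa only [← hcoeff] using h
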